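/- Let f₁, …, f_m : X → (-∞, +∞] be proper convex functions on a real Banach space X, ε₁, …, ε_m ≥ 0, and suppose there exists x₀ ∈ ⋂ᵢ dom fᵢ such that fᵢ is continuous at x₀ for every i ∈ {2, …, m}. Then for every x ∈ ⋂ᵢ dom fᵢ, the set ∂_{ε₁} f₁(x) + ⋯ + ∂_{ε_m} f_m(x) is weak* closed in X*. -/

import Mathlib

/-!
Let `c = x₀ - x`. Every `ε`-subgradient at `x` is bounded above at `c`, and for `i ≠ 0` the
continuity of `fᵢ` at `x₀` makes `fᵢ` bounded above on a ball around `x₀`, so the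
`εᵢ`-subgradients whose value at `c` is bounded below form a norm-bounded, hence weak*
compact, set. Near a point of the closure of the sum, the value at `c` of each summand is
bounded below, so the sum is locally "closed set + compact sets", which is closed.
-/

open Pointwise Topology Set

noncomputable section

variable {X : Type*} [NormedAddCommGroup X] [NormedSpace ℝ X]

/-- `f` is proper: never `-∞` and finite somewhere. -/
def EProper (f : X → EReal) : Prop := (∀ x, f x ≠ ⊥) ∧ ∃ x, f x ≠ ⊤

/-- effective domain of `f`. -/
def edom (f : X → EReal) : Set X := {x | f x < ⊤}

/-- convexity for extended-real-valued functions. -/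
def EConvex (f : X → EReal) : Prop :=
  ∀ x y : X, ∀ t : ℝ, 0 ≤ t → t ≤ 1 →
    f (t • x + (1 - t) • y) ≤ (t : EReal) * f x + ((1 - t : ℝ) : EReal) * f y

/-- the ε-subdifferential of `f` at `x`, a subset of the weak* dual. -/
def epsSubdiff (f : X → EReal) (ε : ℝ) (x : X) : Set (WeakDual ℝ X) :=
  {p | f x ≠ ⊤ ∧ f x ≠ ⊥ ∧ ∀ y : X, (p (y - x) : EReal) + f x ≤ f y + (ε : EReal)}

/-- the (exact) subdifferential of `f` at `x`. -/
def subdiff (f : X → EReal) (x : X) : Set (WeakDual ℝ X) := epsSubdiff f 0 x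

/-- the Fenchel conjugate of `f`. -/
def fconj (f : X → EReal) (p : WeakDual ℝ X) : EReal := ⨆ x : X, (p x : EReal) - f x

/-- the infimal convolution of finitely many functions on the dual. -/
def infConv {m : ℕ} (g : Fin m → WeakDual ℝ X → EReal) (p : WeakDual ℝ X) : EReal :=
  ⨅ (y : Fin m → WeakDual ℝ X) (_ : ∑ i, y i = p), ∑ i, g i (y i)

/-- exactness (attainment) of the infimal convolution at `p`. -/
def infConvExactAt {m : ℕ} (g : Fin m → WeakDual ℝ X → EReal) (p : WeakDual ℝ X) : Prop :=
  ∃ y : Fin m → WeakDual ℝ X, ∑ i, y i = p ∧ infConv g p = ∑ i, g i (y i)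

/-- the epigraph of the Fenchel conjugate of `f`, in `X* × ℝ`. -/
def epiConj (f : X → EReal) : Set ((WeakDual ℝ X) × ℝ) :=
  {q | fconj f q.1 ≤ (q.2 : EReal)}



open Metric

theorem isCompact_finsetSum {G ι : Type*} [AddCommMonoid G] [TopologicalSpace G] [ContinuousAdd G]
    {s : Finset ι} {S : ι → Set G} (hS : ∀ i ∈ s, IsCompact (S i)) :
    IsCompact (∑ i ∈ s, S i) :=
  Finset.sum_induction S IsCompact (fun _ _ ↦ IsCompact.add)
    (by rw [← Set.singleton_zero]; exact isCompact_singleton) hS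

/-- Near a point of the closure, `φ` is bounded below on the sum; since it is bounded above on
every summand, it is then bounded below on each summand, where all but one summand is compact. -/
theorem isClosed_sum_of_isCompact_inter_preimage_Ici {G ι : Type*} [AddCommGroup G]
    [TopologicalSpace G] [IsTopologicalAddGroup G] [Fintype ι] [DecidableEq ι]
    (φ : G →ₜ+ ℝ) (S : ι → Set G) (C : ι → ℝ) (hC : ∀ i, ∀ q ∈ S i, φ q ≤ C i)
    (i₀ : ι) (hS₀ : IsClosed (S i₀)) (hS : ∀ i ≠ i₀, ∀ t, IsCompact (S i ∩ φ ⁻¹' Ici t)) :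
    IsClosed (∑ i, S i) := by
  refine isClosed_of_closure_subset fun p hp ↦ ?_
  set r := ∑ i, C i - φ p + 1
  set T : ι → Set G := fun i ↦ S i ∩ φ ⁻¹' Ici (C i - r)
  have hclosed : IsClosed (S i₀ + ∑ i ∈ Finset.univ.erase i₀, T i) :=
    hS₀.add_right_of_isCompact <|
      isCompact_finsetSum fun i hi ↦ hS i (Finset.ne_of_mem_erase hi) _
  have hnear : φ ⁻¹' Ioi (φ p - 1) ∩ ∑ i, S i ⊆ S i₀ + ∑ i ∈ Finset.univ.erase i₀, T i := by
    rintro _ ⟨hw, hwS⟩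
    obtain ⟨g, hg, rfl⟩ := (Set.mem_fintype_sum _ _).1 hwS
    have hlow : ∀ i, C i - r ≤ φ (g i) := fun i ↦ by
      have : C i - φ (g i) ≤ ∑ j, (C j - φ (g j)) :=
        Finset.single_le_sum (f := fun j ↦ C j - φ (g j))
          (fun j _ ↦ sub_nonneg.2 (hC j _ (hg j))) (Finset.mem_univ i)
      simp only [mem_preimage, mem_Ioi, map_sum] at hw
      rw [Finset.sum_sub_distrib] at this
      linarith
    have hT : ∑ i, g i ∈ ∑ i, T i :=
      Set.finsetSum_mem_finsetSum _ _ _ fun i _ ↦ ⟨hg i, hlow i⟩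
    rw [← Finset.add_sum_erase _ _ (Finset.mem_univ i₀)] at hT
    exact Set.add_subset_add_right inter_subset_left hT
  have hp' : p ∈ S i₀ + ∑ i ∈ Finset.univ.erase i₀, T i :=
    hclosed.closure_subset <| closure_mono hnear <|
      (isOpen_Ioi.preimage φ.continuous).inter_closure ⟨by simp, hp⟩
  rw [← Finset.add_sum_erase _ _ (Finset.mem_univ i₀)]
  exact Set.add_subset_add_left
    (Set.finsetSum_subset_finsetSum _ _ _ fun _ _ ↦ inter_subset_left) hp'

theorem exists_forall_closedBall_le_of_continuousAt {α : Type*} [PseudoMetricSpace α]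
    {f : α → EReal} {x₀ : α} (hf : ContinuousAt f x₀) (hx₀ : f x₀ < ⊤) :
    ∃ M : ℝ, ∃ δ > 0, ∀ y ∈ closedBall x₀ δ, f y ≤ M := by
  obtain ⟨M, hM, -⟩ := EReal.lt_iff_exists_real_btwn.1 hx₀
  obtain ⟨δ, hδ, h⟩ :=
    nhds_basis_closedBall.eventually_iff.1 (hf.eventually (eventually_le_nhds hM))
  exact ⟨M, δ, hδ, h⟩

theorem isClosed_epsSubdiff (f : X → EReal) (ε : ℝ) (x : X) : IsClosed (epsSubdiff f ε x) := by
  by_cases hx : f x ≠ ⊤ ∧ f x ≠ ⊥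
  · obtain ⟨a, ha⟩ : ∃ a : ℝ, f x = a := ⟨_, (EReal.coe_toReal hx.1 hx.2).symm⟩
    have : epsSubdiff f ε x = ⋂ y, {q | ((q (y - x) + a : ℝ) : EReal) ≤ f y + ε} := by
      ext q
      simp [epsSubdiff, ha]
    rw [this]
    exact isClosed_iInter fun y ↦ isClosed_le
      (continuous_coe_real_ereal.comp ((WeakDual.eval_continuous _).add continuous_const))
      continuous_const
  · convert isClosed_empty
    ext q
    simp only [epsSubdiff, mem_ofPred_eq, mem_empty_iff_false, iff_false]
    tauto

theorem epsSubdiff_apply_sub_le {f : X → EReal} {ε : ℝ} {x y : X} {q : WeakDual ℝ X}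
    (hq : q ∈ epsSubdiff f ε x) {M : ℝ} (hy : f y ≤ M) :
    q (y - x) ≤ M + ε - (f x).toReal := by
  obtain ⟨hT, hB, h⟩ := hq
  have := (h y).trans (add_le_add_left hy _)
  rw [← EReal.coe_toReal hT hB, ← EReal.coe_add, ← EReal.coe_add, EReal.coe_le_coe_iff] at this
  linarith

/-- An upper bound of `f` on a ball around `x₀` bounds the norm of an `ε`-subgradient at `x`
whose value at `x₀ - x` is bounded below; conclude by Banach–Alaoglu. -/
theorem isCompact_epsSubdiff_inter_preimage_Ici {f : X → EReal} {ε : ℝ} {x x₀ : X} {M δ : ℝ}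
    (hδ : 0 < δ) (hM : ∀ y ∈ closedBall x₀ δ, f y ≤ M) (t : ℝ) :
    IsCompact (epsSubdiff f ε x ∩ (fun q : WeakDual ℝ X ↦ q (x₀ - x)) ⁻¹' Ici t) := by
  refine (WeakDual.isCompact_closedBall 0 ((M + ε - (f x).toReal - t) / δ)).of_isClosed_subset
    ((isClosed_epsSubdiff f ε x).inter (isClosed_Ici.preimage (WeakDual.eval_continuous _))) ?_
  rintro q ⟨hq, ht⟩
  have hbound : ∀ u ∈ closedBall (0 : X) δ, q u ≤ M + ε - (f x).toReal - t := fun u hu ↦ by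
    have := epsSubdiff_apply_sub_le hq (hM (x₀ + u) (by simpa using hu))
    rw [show x₀ + u - x = (x₀ - x) + u by abel, map_add] at this
    simp only [mem_preimage, mem_Ici] at ht
    linarith
  simp only [mem_preimage, mem_closedBall, dist_zero_right]
  refine ContinuousLinearMap.opNorm_bound_of_ball_bound hδ _ _ fun u hu ↦ ?_
  have hneg := hbound (-u) (by simpa using hu)
  rw [map_neg] at hneg
  rw [WeakDual.toStrongDual_apply, Real.norm_eq_abs, abs_le]
  exact ⟨by linarith, hbound u hu⟩

theorem stmt16_general {X : Type*} [NormedAddCommGroup X] [NormedSpace ℝ X]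
    {m : ℕ} [NeZero m] (f : Fin m → X → EReal) (ε : Fin m → ℝ)
    (x₀ : X) (hx₀ : x₀ ∈ ⋂ i, edom (f i))
    (hcont : ∀ i : Fin m, i ≠ 0 → ContinuousAt (f i) x₀) :
    ∀ x ∈ ⋂ i, edom (f i), IsClosed (∑ i, epsSubdiff (f i) (ε i) x) := by
  intro x _
  have hdom : ∀ i, f i x₀ < ⊤ := fun i ↦ Set.mem_iInter.1 hx₀ i
  let φ : WeakDual ℝ X →ₜ+ ℝ :=
    ⟨AddMonoidHom.mk' (fun q ↦ q (x₀ - x)) fun _ _ ↦ rfl, WeakDual.eval_continuous (x₀ - x)⟩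
  refine isClosed_sum_of_isCompact_inter_preimage_Ici φ _
    (fun i ↦ (f i x₀).toReal + ε i - (f i x).toReal)
    (fun i _ hq ↦ epsSubdiff_apply_sub_le hq (EReal.le_coe_toReal (hdom i).ne))
    0 (isClosed_epsSubdiff _ _ _) fun i hi t ↦ ?_
  obtain ⟨M, δ, hδ, hM⟩ := exists_forall_closedBall_le_of_continuousAt (hcont i hi) (hdom i)
  exact isCompact_epsSubdiff_inter_preimage_Ici hδ hM t

theorem stmt16 {X : Type*} [NormedAddCommGroup X] [NormedSpace ℝ X] [CompleteSpace X]
    {m : ℕ} [NeZero m] (f : Fin m → X → EReal) (ε : Fin m → ℝ) (hε : ∀ i, 0 ≤ ε i)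
    (hp : ∀ i, EProper (f i)) (hc : ∀ i, EConvex (f i))
    (x₀ : X) (hx₀ : x₀ ∈ ⋂ i, edom (f i))
    (hcont : ∀ i : Fin m, i ≠ 0 → ContinuousAt (f i) x₀) :
    ∀ x ∈ ⋂ i, edom (f i), IsClosed (∑ i, epsSubdiff (f i) (ε i) x) :=
  stmt16_general f ε x₀ hx₀ hcont
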